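/- With the Yule model setup, E[U^{(n)}(U^{(n)} − τ^{(n)})] = (2n/(n-1))(H_{n,1} + H_{n,2} − 1 − H_{n,1}^2/n). -/

import Mathlib

/-!
With `S_k = T_1 + ⋯ + T_k` we have `U (U - τ) = U S_κ`. Since `κ` is independent of the `T_i`,
conditioning on `κ` gives `∑_k P(κ = k) E[U S_k]`, and `E[T_i T_j] = 1/(ij) + [i = j]/i²` yields
`E[U S_k] = H_{k,2} + H_{n,1} H_{k,1}`. Against the weights `1/((k+1)(k+2))` both partial harmonic
sums telescope, which produces the closed form.
-/

open MeasureTheory ProbabilityTheory Finset Real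

open scoped ENNReal

lemma integrableOn_pow_mul_exp_neg_mul_Ioi {r : ℝ} (hr : 0 < r) (p : ℕ) :
    IntegrableOn (fun x : ℝ => x ^ p * rexp (-(r * x))) (Set.Ioi 0) := by
  refine (integrableOn_rpow_mul_exp_neg_mul_rpow (s := p) (p := 1)
    (by linarith [p.cast_nonneg (α := ℝ)]) one_pos hr).congr_fun (fun x _ => ?_) measurableSet_Ioi
  simp [Real.rpow_natCast]

lemma integral_pow_mul_exp_neg_mul_Ioi {r : ℝ} (hr : 0 < r) (p : ℕ) :
    ∫ x in Set.Ioi 0, x ^ p * rexp (-(r * x)) = p.factorial / r ^ (p + 1) := by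
  have h := integral_rpow_mul_exp_neg_mul_Ioi (a := p + 1) (by positivity) hr
  rw [add_sub_cancel_right, Real.Gamma_nat_eq_factorial, ← Nat.cast_add_one, Real.rpow_natCast,
    div_pow, one_pow, one_div_mul_eq_div] at h
  rw [← h]
  exact setIntegral_congr_fun measurableSet_Ioi fun x _ => by rw [Real.rpow_natCast]

lemma exponentialPDFReal_mul_eq_indicator (r : ℝ) (g : ℝ → ℝ) :
    (fun x => exponentialPDFReal r x * g x) =
      (Set.Ici 0).indicator (fun x => r * (g x * rexp (-(r * x)))) := by
  ext x
  by_cases hx : 0 ≤ x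
  · simp [exponentialPDFReal, gammaPDFReal, hx]; ring
  · simp [exponentialPDFReal, gammaPDFReal, hx]

lemma expMeasure_eq_withDensity (r : ℝ) :
    expMeasure r = volume.withDensity fun x => ((exponentialPDFReal r x).toNNReal : ℝ≥0∞) :=
  rfl

lemma toNNReal_exponentialPDFReal_smul {r : ℝ} (hr : 0 < r) (g : ℝ → ℝ) :
    (fun x => (exponentialPDFReal r x).toNNReal • g x) =
      fun x => exponentialPDFReal r x * g x := by
  ext x
  rw [NNReal.smul_def, smul_eq_mul, Real.coe_toNNReal _ (exponentialPDFReal_nonneg hr x)]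

lemma integrable_expMeasure_iff {r : ℝ} (hr : 0 < r) {g : ℝ → ℝ} :
    Integrable g (expMeasure r) ↔ Integrable (fun x => exponentialPDFReal r x * g x) := by
  rw [expMeasure_eq_withDensity, integrable_withDensity_iff_integrable_smul
    (measurable_exponentialPDFReal r).real_toNNReal, toNNReal_exponentialPDFReal_smul hr]

lemma integral_expMeasure {r : ℝ} (hr : 0 < r) (g : ℝ → ℝ) :
    ∫ x, g x ∂expMeasure r = ∫ x, exponentialPDFReal r x * g x := by
  rw [expMeasure_eq_withDensity, integral_withDensity_eq_integral_smul
    (measurable_exponentialPDFReal r).real_toNNReal, toNNReal_exponentialPDFReal_smul hr]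

lemma integrable_pow_expMeasure {r : ℝ} (hr : 0 < r) (p : ℕ) :
    Integrable (fun x => x ^ p) (expMeasure r) := by
  rw [integrable_expMeasure_iff hr, exponentialPDFReal_mul_eq_indicator,
    integrable_indicator_iff measurableSet_Ici, integrableOn_Ici_iff_integrableOn_Ioi]
  exact (integrableOn_pow_mul_exp_neg_mul_Ioi hr p).const_mul r

lemma integral_pow_expMeasure {r : ℝ} (hr : 0 < r) (p : ℕ) :
    ∫ x, x ^ p ∂expMeasure r = p.factorial / r ^ p := by
  rw [integral_expMeasure hr, exponentialPDFReal_mul_eq_indicator,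
    integral_indicator measurableSet_Ici, integral_Ici_eq_integral_Ioi, integral_const_mul,
    integral_pow_mul_exp_neg_mul_Ioi hr, pow_succ]
  field_simp

namespace ProbabilityTheory

variable {Ω : Type*} [MeasurableSpace Ω] {P : Measure Ω} {X : Ω → ℝ} {r : ℝ}

lemma HasLaw.memLp_two_of_expMeasure (hX : HasLaw X (expMeasure r) P) (hr : 0 < r) :
    MemLp X 2 P := by
  refine (memLp_two_iff_integrable_sq hX.aemeasurable.aestronglyMeasurable).2 ?_
  exact (hX.map_eq ▸ integrable_pow_expMeasure hr 2).comp_aemeasurable hX.aemeasurable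

lemma HasLaw.integral_pow_of_expMeasure (hX : HasLaw X (expMeasure r) P) (hr : 0 < r) (p : ℕ) :
    ∫ ω, X ω ^ p ∂P = p.factorial / r ^ p :=
  (hX.integral_comp (f := fun x => x ^ p) (by fun_prop)).trans (integral_pow_expMeasure hr p)

lemma HasLaw.integral_of_expMeasure (hX : HasLaw X (expMeasure r) P) (hr : 0 < r) :
    ∫ ω, X ω ∂P = 1 / r := by
  simpa using hX.integral_pow_of_expMeasure hr 1

variable {ι : Type*} {T : ι → Ω → ℝ} {rate : ι → ℝ}

lemma integral_mul_of_iIndepFun_expMeasure [IsProbabilityMeasure P] [DecidableEq ι]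
    (hindep : iIndepFun T P) {i j : ι} (hi : HasLaw (T i) (expMeasure (rate i)) P)
    (hj : HasLaw (T j) (expMeasure (rate j)) P) (hri : 0 < rate i) (hrj : 0 < rate j) :
    ∫ ω, T i ω * T j ω ∂P = 1 / rate i * (1 / rate j) + if i = j then 1 / rate i ^ 2 else 0 := by
  rcases eq_or_ne i j with rfl | hij
  · simp [← sq, hi.integral_pow_of_expMeasure hri, Nat.factorial]
    ring
  · rw [(hindep.indepFun hij).integral_fun_mul_eq_mul_integral
      hi.aemeasurable.aestronglyMeasurable hj.aemeasurable.aestronglyMeasurable, if_neg hij,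
      hi.integral_of_expMeasure hri, hj.integral_of_expMeasure hrj, add_zero]

lemma integrable_sum_mul_sum {s t : Finset ι} (hs : ∀ i ∈ s, MemLp (T i) 2 P)
    (ht : ∀ j ∈ t, MemLp (T j) 2 P) :
    Integrable (fun ω => (∑ i ∈ s, T i ω) * ∑ j ∈ t, T j ω) P :=
  (memLp_finsetSum s hs).integrable_mul (memLp_finsetSum t ht)

lemma integral_sum_mul_sum_of_iIndepFun_expMeasure [IsProbabilityMeasure P] [DecidableEq ι]
    (hindep : iIndepFun T P) {s t : Finset ι} (hts : t ⊆ s)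
    (hlaw : ∀ i ∈ s, HasLaw (T i) (expMeasure (rate i)) P) (hrate : ∀ i ∈ s, 0 < rate i) :
    ∫ ω, (∑ i ∈ s, T i ω) * ∑ j ∈ t, T j ω ∂P =
      ∑ j ∈ t, 1 / rate j ^ 2 + (∑ i ∈ s, 1 / rate i) * ∑ j ∈ t, 1 / rate j := by
  have hint : ∀ i ∈ s, ∀ j ∈ s, Integrable (fun ω => T i ω * T j ω) P := fun i hi j hj =>
    ((hlaw i hi).memLp_two_of_expMeasure (hrate i hi)).integrable_mul
      ((hlaw j hj).memLp_two_of_expMeasure (hrate j hj))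
  have hpair : ∀ i ∈ s, ∀ j ∈ t, ∫ ω, T i ω * T j ω ∂P =
      1 / rate i * (1 / rate j) + if i = j then 1 / rate j ^ 2 else 0 := fun i hi j hj => by
    rw [integral_mul_of_iIndepFun_expMeasure hindep (hlaw i hi) (hlaw j (hts hj)) (hrate i hi)
      (hrate j (hts hj))]
    split_ifs with hij <;> simp [hij]
  simp_rw [sum_mul_sum]
  rw [integral_finsetSum _ fun i hi => integrable_finsetSum _ fun j hj => hint i hi j (hts hj)]
  rw [sum_congr rfl fun i hi => (integral_finsetSum _ fun j hj => hint i hi j (hts hj)).trans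
    (sum_congr rfl (hpair i hi))]
  simp only [sum_add_distrib, sum_comm (s := s), sum_ite_eq, sum_ite_mem, inter_eq_right.mpr hts]
  exact add_comm _ _

lemma integral_comp_eq_sum_of_indepFun {ι E : Type*} [MeasurableSpace ι]
    [MeasurableSingletonClass ι] [MeasurableSpace E] {κ : Ω → ι} {X : Ω → E}
    (hκ : Measurable κ) (hindep : IndepFun κ X P) {K : Finset ι} (hK : ∀ ω, κ ω ∈ K)
    {F : ι → E → ℝ} (hF : ∀ k ∈ K, Measurable (F k))
    (hFint : ∀ k ∈ K, Integrable (fun ω => F k (X ω)) P) :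
    ∫ ω, F (κ ω) (X ω) ∂P = ∑ k ∈ K, P.real {ω | κ ω = k} * ∫ ω, F k (X ω) ∂P := by
  classical
  have hsplit : ∀ ω, F (κ ω) (X ω) = ∑ k ∈ K, ({k} : Set ι).indicator 1 (κ ω) * F k (X ω) := by
    intro ω
    simp only [Set.indicator_apply, Set.mem_singleton_iff, Pi.one_apply, ite_mul, one_mul,
      zero_mul, sum_ite_eq, if_pos (hK ω)]
  have hind : ∀ k, Measurable (({k} : Set ι).indicator (1 : ι → ℝ)) := fun k =>
    measurable_one.indicator (measurableSet_singleton k)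
  have hbound : ∀ k ω, ‖({k} : Set ι).indicator (1 : ι → ℝ) (κ ω)‖ ≤ 1 := fun k ω => by
    by_cases h : κ ω = k <;> simp [h]
  have hint : ∀ k ∈ K, Integrable (fun ω => ({k} : Set ι).indicator 1 (κ ω) * F k (X ω)) P :=
    fun k hk => (hFint k hk).bdd_mul ((hind k).comp hκ).aestronglyMeasurable
      (.of_forall (hbound k))
  simp_rw [hsplit]
  rw [integral_finsetSum _ hint]
  refine sum_congr rfl fun k hk => ?_
  refine ((hindep.comp (hind k) (hF k hk)).integral_fun_mul_eq_mul_integral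
    ((hind k).comp hκ).aestronglyMeasurable (hFint k hk).aestronglyMeasurable).trans ?_
  congr 1
  exact integral_indicator_one (hκ (measurableSet_singleton k))

end ProbabilityTheory

lemma sum_Icc_one_sub_sum_Icc_add_one {M : Type*} [AddCommGroup M] (f : ℕ → M) {k n : ℕ}
    (hkn : k ≤ n) : ∑ i ∈ Icc 1 n, f i - ∑ i ∈ Icc (k + 1) n, f i = ∑ i ∈ Icc 1 k, f i := by
  have h := sum_Ioc_consecutive f (Nat.zero_le k) hkn
  simp only [← Icc_add_one_left_eq_Ioc, zero_add] at h
  rw [← h, add_sub_cancel_right]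

lemma sum_Icc_harmonic_div_add_one_mul_add_two (m : ℕ) :
    ∑ k ∈ Icc 1 m, 1 / (((k : ℝ) + 1) * ((k : ℝ) + 2)) * ∑ i ∈ Icc 1 k, (1 : ℝ) / i =
      1 - 1 / ((m : ℝ) + 1) - (∑ i ∈ Icc 1 m, (1 : ℝ) / i) / ((m : ℝ) + 2) := by
  induction m with
  | zero => simp
  | succ m ih =>
    rw [sum_Icc_succ_top (Nat.le_add_left 1 m), ih, sum_Icc_succ_top (Nat.le_add_left 1 m)]
    push_cast
    field_simp
    ring

lemma sum_Icc_harmonic_sq_div_add_one_mul_add_two (m : ℕ) :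
    ∑ k ∈ Icc 1 m, 1 / (((k : ℝ) + 1) * ((k : ℝ) + 2)) * ∑ i ∈ Icc 1 k, (1 : ℝ) / (i : ℝ) ^ 2 =
      ∑ i ∈ Icc 1 m, (1 : ℝ) / (i : ℝ) ^ 2 - 1 + 1 / ((m : ℝ) + 1) -
        (∑ i ∈ Icc 1 m, (1 : ℝ) / (i : ℝ) ^ 2) / ((m : ℝ) + 2) := by
  induction m with
  | zero => simp
  | succ m ih =>
    rw [sum_Icc_succ_top (Nat.le_add_left 1 m), ih, sum_Icc_succ_top (Nat.le_add_left 1 m)]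
    push_cast
    field_simp
    ring

lemma sum_yule_weight_mul_cross_moment (n : ℕ) (hn : 2 ≤ n) :
    ∑ k ∈ Icc 1 (n - 1),
      2 * ((n : ℝ) + 1) / ((n : ℝ) - 1) * (1 / (((k : ℝ) + 1) * ((k : ℝ) + 2))) *
        (∑ j ∈ Icc 1 k, 1 / (j : ℝ) ^ 2 +
          (∑ i ∈ Icc 1 n, 1 / (i : ℝ)) * ∑ j ∈ Icc 1 k, 1 / (j : ℝ)) =
      2 * (n : ℝ) / ((n : ℝ) - 1) *
        (∑ i ∈ Icc 1 n, 1 / (i : ℝ) + ∑ i ∈ Icc 1 n, 1 / (i : ℝ) ^ 2 - 1 -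
          (∑ i ∈ Icc 1 n, 1 / (i : ℝ)) ^ 2 / n) := by
  set H := ∑ i ∈ Icc 1 n, 1 / (i : ℝ)
  set c := 2 * ((n : ℝ) + 1) / ((n : ℝ) - 1)
  have hsplit : ∀ k : ℕ, c * (1 / (((k : ℝ) + 1) * ((k : ℝ) + 2))) *
      (∑ j ∈ Icc 1 k, 1 / (j : ℝ) ^ 2 + H * ∑ j ∈ Icc 1 k, 1 / (j : ℝ)) =
      c * (1 / (((k : ℝ) + 1) * ((k : ℝ) + 2)) * ∑ j ∈ Icc 1 k, 1 / (j : ℝ) ^ 2) +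
        c * H * (1 / (((k : ℝ) + 1) * ((k : ℝ) + 2)) * ∑ j ∈ Icc 1 k, 1 / (j : ℝ)) :=
    fun k => by ring
  rw [sum_congr rfl fun k _ => hsplit k, sum_add_distrib, ← mul_sum, ← mul_sum,
    sum_Icc_harmonic_sq_div_add_one_mul_add_two, sum_Icc_harmonic_div_add_one_mul_add_two]
  obtain ⟨m, rfl⟩ : ∃ m, n = m + 1 := ⟨n - 1, by omega⟩
  have hm : (m : ℝ) ≠ 0 := by norm_cast; omega
  simp only [H, c, Nat.add_sub_cancel, sum_Icc_succ_top (Nat.le_add_left 1 m)]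
  push_cast
  field_simp
  ring

theorem cross_moment_height_shared_path
    {Ω : Type*} [MeasurableSpace Ω] {P : Measure Ω} [IsProbabilityMeasure P]
    (n : ℕ) (hn : 2 ≤ n)
    (T : ℕ → Ω → ℝ) (κ : Ω → ℕ)
    (hTmeas : ∀ i, Measurable (T i)) (hκmeas : Measurable κ)
    (hTindep : iIndepFun T P)
    (hTdist : ∀ i ∈ Finset.Icc 1 n, P.map (T i) = expMeasure i)
    (hκrange : ∀ ω, κ ω ∈ Finset.Icc 1 (n - 1))
    (hκdist : ∀ k ∈ Finset.Icc 1 (n - 1),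
      P {ω | κ ω = k} =
        ENNReal.ofReal ((2 * ((n : ℝ) + 1) / ((n : ℝ) - 1)) *
          (1 / (((k : ℝ) + 1) * ((k : ℝ) + 2)))))
    (hindep : IndepFun κ (fun ω i => T i ω) P)
    (H1 H2 : ℝ)
    (hH1 : H1 = ∑ i ∈ Finset.Icc 1 n, (1 : ℝ) / i)
    (hH2 : H2 = ∑ i ∈ Finset.Icc 1 n, (1 : ℝ) / (i : ℝ) ^ 2) :
    ∫ ω, (∑ i ∈ Finset.Icc 1 n, T i ω) *
        ((∑ i ∈ Finset.Icc 1 n, T i ω) - ∑ i ∈ Finset.Icc (κ ω + 1) n, T i ω) ∂P =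
      2 * (n : ℝ) / ((n : ℝ) - 1) * (H1 + H2 - 1 - H1 ^ 2 / (n : ℝ)) := by
  have hlaw : ∀ i ∈ Icc 1 n, HasLaw (T i) (expMeasure i) P :=
    fun i hi => ⟨(hTmeas i).aemeasurable, hTdist i hi⟩
  have hrate : ∀ i ∈ Icc 1 n, (0 : ℝ) < i := fun i hi => Nat.cast_pos.2 (mem_Icc.1 hi).1
  have hsub : ∀ k ∈ Icc 1 (n - 1), Icc 1 k ⊆ Icc 1 n := fun k hk =>
    Icc_subset_Icc le_rfl ((mem_Icc.1 hk).2.trans (Nat.sub_le n 1))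
  have hweight : ∀ k ∈ Icc 1 (n - 1), 0 ≤ 2 * ((n : ℝ) + 1) / ((n : ℝ) - 1) *
      (1 / (((k : ℝ) + 1) * ((k : ℝ) + 2))) := fun k _ => by
    have : (1 : ℝ) < n := by exact_mod_cast hn
    have : (0 : ℝ) < n - 1 := by linarith
    positivity
  simp_rw [sum_Icc_one_sub_sum_Icc_add_one _ ((mem_Icc.1 (hκrange _)).2.trans (Nat.sub_le n 1))]
  rw [integral_comp_eq_sum_of_indepFun
      (F := fun k v => (∑ i ∈ Icc 1 n, v i) * ∑ j ∈ Icc 1 k, v j) hκmeas hindep hκrange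
      (fun k _ => by fun_prop)
      (fun k hk => integrable_sum_mul_sum
        (fun i hi => (hlaw i hi).memLp_two_of_expMeasure (hrate i hi))
        (fun j hj => (hlaw j (hsub k hk hj)).memLp_two_of_expMeasure (hrate j (hsub k hk hj))))]
  rw [sum_congr rfl fun k hk => by
    rw [measureReal_def, hκdist k hk, ENNReal.toReal_ofReal (hweight k hk),
      integral_sum_mul_sum_of_iIndepFun_expMeasure hTindep (hsub k hk) hlaw hrate]]
  rw [hH1, hH2]
  exact sum_yule_weight_mul_cross_moment n hn
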